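/- For positive integers 1 ≤ k ≤ n, let h_{k|n}(p) = Σ_{i=k}^{n} C(n,i) p^i (1−p)^{n−i} and H_{k|n}(p) = p·h_{k|n}'(p)/h_{k|n}(p) for p∈(0,1). Then the function p ↦ (1−p)·H_{k|n}'(p)/H_{k|n}(p) is negative (≤ 0) and decreasing on (0,1). -/

import Mathlib

open Set

/-- Reliability (dual distortion) function of a `k`-out-of-`n` system with
i.i.d. components: `h_{k|n}(p) = Σ_{i=k}^{n} C(n,i) pⁱ (1-p)^{n-i}`. -/
noncomputable def hkn (k n : ℕ) (p : ℝ) : ℝ :=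
  ∑ i ∈ Finset.Icc k n, (n.choose i : ℝ) * p ^ i * (1 - p) ^ (n - i)

/-- `H_{k|n}(p) = p h_{k|n}'(p) / h_{k|n}(p)`. -/
noncomputable def Hkn (k n : ℕ) (p : ℝ) : ℝ := p * deriv (hkn k n) p / hkn k n p

/-- Auxiliary: `Np k n p = Σ_{j=k}^{n} C(n,j+1) pʲ (1-p)^{n-j}`. -/
noncomputable def Np (k n : ℕ) (p : ℝ) : ℝ :=
  ∑ j ∈ Finset.Icc k n, (n.choose (j+1) : ℝ) * p ^ j * (1 - p) ^ (n - j)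

section Aux
open Finset

lemma telescope_icc (f : ℕ → ℝ) (k : ℕ) (hk1 : 1 ≤ k) :
    ∀ n, k ≤ n → ∑ i ∈ Finset.Icc k n, (f (i-1) - f i) = f (k-1) - f n := by
  intro n
  induction n with
  | zero => intro h; interval_cases k <;> simp_all
  | succ m ih =>
    intro h
    rcases Nat.lt_or_ge m k with hm | hm
    · have : k = m + 1 := by omega
      subst this
      simp
    · rw [Finset.sum_Icc_succ_top (by omega), ih hm]
      simp only [Nat.add_sub_cancel]
      ring

lemma nat_id1 (n i : ℕ) (h1 : 1 ≤ i) (h2 : i ≤ n) :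
    n * (n-1).choose (i-1) = n.choose i * i := by
  obtain ⟨i', rfl⟩ : ∃ i', i = i'+1 := ⟨i-1, by omega⟩
  obtain ⟨n', rfl⟩ : ∃ n', n = n'+1 := ⟨n-1, by omega⟩
  simpa using Nat.add_one_mul_choose_eq n' i'

lemma nat_id2 (n i : ℕ) (hn : 1 ≤ n) :
    n * (n-1).choose i = n.choose i * (n - i) := by
  obtain ⟨n', rfl⟩ : ∃ n', n = n'+1 := ⟨n-1, by omega⟩
  rw [← Nat.choose_succ_right_eq]
  simpa using Nat.add_one_mul_choose_eq n' i

lemma hasDerivAt_hkn (k n : ℕ) (hk1 : 1 ≤ k) (hkn' : k ≤ n) (p : ℝ) :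
    HasDerivAt (hkn k n)
      ((k : ℝ) * (n.choose k : ℝ) * p ^ (k-1) * (1-p) ^ (n-k)) p := by
  have hn1 : 1 ≤ n := le_trans hk1 hkn'
  have hq : ∀ m : ℕ, HasDerivAt (fun x : ℝ => (1-x)^m) (-((m:ℝ) * (1-p)^(m-1))) p := by
    intro m
    have h1 : HasDerivAt (fun x : ℝ => 1 - x) (-1 : ℝ) p := by
      exact (hasDerivAt_id' (x := p)).const_sub (1:ℝ)
    have := (hasDerivAt_pow m (1-p)).comp p h1
    exact this.congr_deriv (by ring)
  set u : ℕ → ℝ := fun j => ((n-1).choose j : ℝ) * p ^ j * (1-p) ^ (n-1-j) with hu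
  have hterm : ∀ i ∈ Finset.Icc k n,
      HasDerivAt (fun x : ℝ => (n.choose i : ℝ) * x ^ i * (1-x) ^ (n-i))
        ((n:ℝ) * (u (i-1) - u i)) p := by
    intro i hi
    simp only [Finset.mem_Icc] at hi
    have hi1 : 1 ≤ i := le_trans hk1 hi.1
    have hd := (((hasDerivAt_pow i p).const_mul ((n.choose i : ℝ))).mul (hq (n-i)))
    refine hd.congr_deriv (Eq.symm ?_)
    have c1 : (n:ℝ) * ((n-1).choose (i-1) : ℝ) = (n.choose i : ℝ) * i :=
      by exact_mod_cast congrArg (Nat.cast (R := ℝ)) (nat_id1 n i hi1 hi.2)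
    have c2 : (n:ℝ) * ((n-1).choose i : ℝ) = (n.choose i : ℝ) * ((n:ℝ) - i) := by
      have := congrArg (Nat.cast (R := ℝ)) (nat_id2 n i hn1)
      push_cast [hi.2] at this
      linarith
    have e1 : n - i = (n-1) - (i-1) := by omega
    have e2 : n - i - 1 = n - 1 - i := by omega
    have e3 : ((n-i:ℕ):ℝ) = (n:ℝ) - i := by push_cast [hi.2]; ring
    rw [hu]
    simp only
    rw [← e1, e2, e3]
    linear_combination p^(i-1)*(1-p)^(n-i) * c1 - p^i*(1-p)^(n-1-i) * c2
  have hsum := HasDerivAt.fun_sum hterm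
  have heq : ∑ i ∈ Finset.Icc k n, (n:ℝ) * (u (i-1) - u i)
      = (k : ℝ) * (n.choose k : ℝ) * p ^ (k-1) * (1-p) ^ (n-k) := by
    rw [← Finset.mul_sum, telescope_icc u k hk1 n hkn']
    have hun : u n = 0 := by
      simp [hu, Nat.choose_eq_zero_of_lt (show n - 1 < n by omega)]
    have c1 : (n:ℝ) * ((n-1).choose (k-1) : ℝ) = (n.choose k : ℝ) * k :=
      by exact_mod_cast congrArg (Nat.cast (R := ℝ)) (nat_id1 n k hk1 hkn')
    have e1 : n - 1 - (k-1) = n - k := by omega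
    rw [hun, hu]
    simp only
    rw [e1]
    linear_combination p^(k-1)*(1-p)^(n-k) * c1
  rw [heq] at hsum
  exact hsum

lemma hkn_pos (k n : ℕ) (hkn' : k ≤ n) {p : ℝ} (hp : p ∈ Set.Ioo (0:ℝ) 1) :
    0 < hkn k n p := by
  obtain ⟨hp0, hp1⟩ := hp
  have hq : 0 < 1 - p := by linarith
  refine Finset.sum_pos' (fun i _ => ?_) ⟨k, Finset.mem_Icc.mpr ⟨le_refl k, hkn'⟩, ?_⟩
  · positivity
  · have := Nat.choose_pos hkn'
    positivity

lemma Np_nonneg (k n : ℕ) {p : ℝ} (hp : p ∈ Set.Ioo (0:ℝ) 1) : 0 ≤ Np k n p := by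
  obtain ⟨hp0, hp1⟩ := hp
  have hq : 0 < 1 - p := by linarith
  refine Finset.sum_nonneg fun i _ => by positivity

lemma Np_identity (k n : ℕ) (hk1 : 1 ≤ k) (hkn' : k ≤ n) (p : ℝ) :
    p * Np k n p
      = (1 - p) * (hkn k n p - (n.choose k : ℝ) * p ^ k * (1-p) ^ (n-k)) := by
  have lhs_eq : p * Np k n p
      = ∑ i ∈ Finset.Icc (k+1) (n+1), (n.choose i : ℝ) * p ^ i * (1-p) ^ (n+1-i) := by
    rw [Np, Finset.mul_sum, ← Finset.map_add_right_Icc k n 1, Finset.sum_map]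
    refine Finset.sum_congr rfl fun j hj => ?_
    simp only [Finset.mem_Icc] at hj
    have e : n + 1 - (j + 1) = n - j := by omega
    simp only [addRightEmbedding, Function.Embedding.coeFn_mk, e]
    ring
  have rhs_eq : (1 - p) * (hkn k n p - (n.choose k : ℝ) * p ^ k * (1-p) ^ (n-k))
      = ∑ i ∈ Finset.Icc (k+1) n, (n.choose i : ℝ) * p ^ i * (1-p) ^ (n+1-i) := by
    rw [hkn, Finset.Icc_eq_cons_Ioc hkn', Finset.sum_cons]
    have : Finset.Ioc k n = Finset.Icc (k+1) n := by
      ext x; simp [Finset.mem_Ioc, Finset.mem_Icc]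
    rw [this]
    have : (1-p) * ((n.choose k : ℝ) * p ^ k * (1 - p) ^ (n - k)
        + ∑ i ∈ Finset.Icc (k+1) n, (n.choose i : ℝ) * p ^ i * (1 - p) ^ (n - i)
        - (n.choose k : ℝ) * p ^ k * (1-p) ^ (n-k))
        = ∑ i ∈ Finset.Icc (k+1) n, (1-p) * ((n.choose i : ℝ) * p ^ i * (1 - p) ^ (n - i)) := by
      rw [← Finset.mul_sum]; ring
    rw [this]
    refine Finset.sum_congr rfl fun i hi => ?_
    simp only [Finset.mem_Icc] at hi
    have e : n + 1 - i = (n - i) + 1 := by omega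
    rw [e, pow_succ]
    ring
  rw [lhs_eq, rhs_eq, Finset.sum_Icc_succ_top (by omega)]
  simp [Nat.choose_eq_zero_of_lt (show n < n + 1 by omega)]

lemma choose_ratio {n j i : ℕ} (hji : j ≤ i) (hin : i ≤ n) :
    n.choose (i+1) * n.choose j ≤ n.choose (j+1) * n.choose i := by
  have key : n.choose (i+1) * n.choose j * ((i+1)*(j+1))
      ≤ n.choose (j+1) * n.choose i * ((i+1)*(j+1)) := by
    have e1 : n.choose (i+1) * n.choose j * ((i+1)*(j+1))
        = (n.choose (i+1) * (i+1)) * (n.choose j * (j+1)) := by ring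
    have e2 : n.choose (j+1) * n.choose i * ((i+1)*(j+1))
        = (n.choose (j+1) * (j+1)) * (n.choose i * (i+1)) := by ring
    rw [e1, e2, Nat.choose_succ_right_eq n i, Nat.choose_succ_right_eq n j]
    have e3 : n.choose i * (n - i) * (n.choose j * (j+1))
        = (n.choose i * n.choose j) * ((n-i) * (j+1)) := by ring
    have e4 : n.choose j * (n - j) * (n.choose i * (i+1))
        = (n.choose i * n.choose j) * ((n-j) * (i+1)) := by ring
    rw [e3, e4]
    exact Nat.mul_le_mul_left _ (Nat.mul_le_mul (Nat.sub_le_sub_left hji n) (by omega))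
  exact Nat.le_of_mul_le_mul_right key (by positivity)

lemma choose_neg_coeff {n k j : ℕ} (hkj : k ≤ j) (hjn : j ≤ n) :
    k * n.choose (j+1) ≤ (n - k) * n.choose j := by
  have key : k * n.choose (j+1) * (j+1) ≤ (n - k) * n.choose j * (j+1) := by
    have e1 : k * n.choose (j+1) * (j+1) = k * (n.choose (j+1) * (j+1)) := by ring
    rw [e1, Nat.choose_succ_right_eq n j]
    have e2 : k * (n.choose j * (n - j)) = n.choose j * (k * (n - j)) := by ring
    have e3 : (n - k) * n.choose j * (j+1) = n.choose j * ((n - k) * (j+1)) := by ring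
    rw [e2, e3]
    refine Nat.mul_le_mul_left _ ?_
    have h1 : k ≤ n := le_trans hkj hjn
    zify [hjn, h1]
    nlinarith [hkj, hjn, h1]
  exact Nat.le_of_mul_le_mul_right key (by omega)

-- f_j(y) f_i(x) ≤ f_j(x) f_i(y)  for j ≤ i ≤ n, 0 ≤ x ≤ y ≤ 1
lemma mono_f {n j i : ℕ} (hji : j ≤ i) (hin : i ≤ n) {x y : ℝ}
    (hx0 : 0 ≤ x) (hy1 : y ≤ 1) (hxy : x ≤ y) :
    y^j * (1-y)^(n-j) * (x^i * (1-x)^(n-i))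
      ≤ x^j * (1-x)^(n-j) * (y^i * (1-y)^(n-i)) := by
  have hy0 : 0 ≤ y := le_trans hx0 hxy
  have hx1 : x ≤ 1 := le_trans hxy hy1
  have hqx : (0:ℝ) ≤ 1 - x := by linarith
  have hqy : (0:ℝ) ≤ 1 - y := by linarith
  obtain ⟨d, rfl⟩ : ∃ d, i = j + d := ⟨i-j, by omega⟩
  obtain ⟨e, rfl⟩ : ∃ e, n = j + d + e := ⟨n-(j+d), by omega⟩
  rw [show j+d+e-j = d+e by omega, show j+d+e-(j+d) = e by omega]
  have h1 : y^j * (1-y)^(d+e) * (x^(j+d) * (1-x)^e)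
      = ((x*y)^j * ((1-x)*(1-y))^e) * (x*(1-y))^d := by
    rw [pow_add, pow_add, mul_pow, mul_pow, mul_pow]; ring
  have h2 : x^j * (1-x)^(d+e) * (y^(j+d) * (1-y)^e)
      = ((x*y)^j * ((1-x)*(1-y))^e) * (y*(1-x))^d := by
    rw [pow_add, pow_add, mul_pow, mul_pow, mul_pow]; ring
  rw [h1, h2]
  refine mul_le_mul_of_nonneg_left ?_
    (mul_nonneg (pow_nonneg (mul_nonneg hx0 hy0) j)
      (pow_nonneg (mul_nonneg hqx hqy) e))
  refine pow_le_pow_left₀ (by nlinarith) (by nlinarith) d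

lemma cross_ineq (k n : ℕ) {x y : ℝ} (hx : x ∈ Set.Ioo (0:ℝ) 1)
    (hy : y ∈ Set.Ioo (0:ℝ) 1) (hxy : x ≤ y) :
    Np k n y * hkn k n x ≤ Np k n x * hkn k n y := by
  obtain ⟨hx0, hx1⟩ := hx
  obtain ⟨hy0, hy1⟩ := hy
  set S := Finset.Icc k n with hS
  set f : ℕ → ℝ → ℝ := fun m p => p ^ m * (1-p) ^ (n-m) with hf
  set A : ℕ → ℝ := fun m => (n.choose (m+1) : ℝ) with hA
  set B : ℕ → ℝ := fun m => (n.choose m : ℝ) with hB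
  set F : ℕ → ℕ → ℝ := fun j i => A j * f j y * (B i * f i x) - A j * f j x * (B i * f i y)
    with hF
  have key : ∀ j ∈ S, ∀ i ∈ S, F j i + F i j ≤ 0 := by
    intro j hj i hi
    simp only [hS, Finset.mem_Icc] at hj hi
    have main : ∀ j i : ℕ, j ≤ i → i ≤ n → F j i + F i j ≤ 0 := by
      intro j i hji hin
      have hcoef : (0:ℝ) ≤ A j * B i - A i * B j := by
        have := choose_ratio hji hin
        have : (n.choose (i+1) * n.choose j : ℝ) ≤ (n.choose (j+1) * n.choose i : ℝ) := by
          exact_mod_cast this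
        simp only [hA, hB]
        push_cast at this ⊢
        linarith
      have hmono : f j y * f i x - f j x * f i y ≤ 0 := by
        have := mono_f hji hin (le_of_lt hx0) (le_of_lt hy1) hxy
        simp only [hf]
        nlinarith [this]
      have expand : F j i + F i j = (A j * B i - A i * B j) * (f j y * f i x - f j x * f i y) := by
        simp only [hF]; ring
      rw [expand]
      exact mul_nonpos_of_nonneg_of_nonpos hcoef hmono
    rcases le_total j i with h | h
    · exact main j i h hi.2
    · have := main i j h hj.2
      linarith [this]
  have hdouble : ∑ j ∈ S, ∑ i ∈ S, F j i ≤ 0 := by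
    have h2 : (∑ j ∈ S, ∑ i ∈ S, F j i) + (∑ j ∈ S, ∑ i ∈ S, F i j) ≤ 0 := by
      rw [← Finset.sum_add_distrib]
      refine Finset.sum_nonpos fun j hj => ?_
      rw [← Finset.sum_add_distrib]
      exact Finset.sum_nonpos fun i hi => key j hj i hi
    have h3 : (∑ j ∈ S, ∑ i ∈ S, F i j) = ∑ j ∈ S, ∑ i ∈ S, F j i := Finset.sum_comm
    linarith
  have expand2 : Np k n y * hkn k n x - Np k n x * hkn k n y = ∑ j ∈ S, ∑ i ∈ S, F j i := by
    rw [Np, hkn, Np, hkn, Finset.sum_mul_sum, Finset.sum_mul_sum, ← Finset.sum_sub_distrib]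
    refine Finset.sum_congr rfl fun j hj => ?_
    rw [← Finset.sum_sub_distrib]
    refine Finset.sum_congr rfl fun i hi => ?_
    simp only [hF, hA, hB, hf]
    ring
  linarith [expand2 ▸ hdouble]

lemma neg_ineq (k n : ℕ) (hk1 : 1 ≤ k) (hkn' : k ≤ n) {p : ℝ}
    (hp : p ∈ Set.Ioo (0:ℝ) 1) :
    (k:ℝ) * Np k n p ≤ ((n:ℝ) - k) * hkn k n p := by
  obtain ⟨hp0, hp1⟩ := hp
  have hq : (0:ℝ) < 1 - p := by linarith
  rw [Np, hkn, Finset.mul_sum, Finset.mul_sum]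
  refine Finset.sum_le_sum fun j hj => ?_
  simp only [Finset.mem_Icc] at hj
  have hc := choose_neg_coeff hj.1 hj.2
  have hc' : (k:ℝ) * (n.choose (j+1) : ℝ) ≤ ((n:ℝ) - k) * (n.choose j : ℝ) := by
    have h1 : ((k * n.choose (j+1) : ℕ) : ℝ) ≤ (((n-k) * n.choose j : ℕ) : ℝ) := by
      exact_mod_cast hc
    push_cast [hkn'] at h1
    linarith
  have hmon : (0:ℝ) ≤ p ^ j * (1-p) ^ (n-j) := by positivity
  calc (k:ℝ) * ((n.choose (j+1) : ℝ) * p ^ j * (1-p) ^ (n-j))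
      = ((k:ℝ) * (n.choose (j+1) : ℝ)) * (p ^ j * (1-p) ^ (n-j)) := by ring
    _ ≤ (((n:ℝ) - k) * (n.choose j : ℝ)) * (p ^ j * (1-p) ^ (n-j)) :=
        mul_le_mul_of_nonneg_right hc' hmon
    _ = ((n:ℝ) - k) * ((n.choose j : ℝ) * p ^ j * (1-p) ^ (n-j)) := by ring

lemma Hkn_eq_ratio (k n : ℕ) (hk1 : 1 ≤ k) (hkn' : k ≤ n) :
    Hkn k n = fun x : ℝ =>
      (k : ℝ) * (n.choose k : ℝ) * x ^ k * (1-x) ^ (n-k) / hkn k n x := by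
  funext x
  rw [Hkn, (hasDerivAt_hkn k n hk1 hkn' x).deriv]
  have : x * ((k : ℝ) * (n.choose k : ℝ) * x ^ (k-1) * (1-x) ^ (n-k))
      = (k : ℝ) * (n.choose k : ℝ) * x ^ k * (1-x) ^ (n-k) := by
    have : x * x ^ (k-1) = x ^ k := by
      rw [← pow_succ']
      congr 1
      omega
    linear_combination ((k:ℝ)*(n.choose k : ℝ))*(1-x)^(n-k) * this
  rw [this]

lemma key_eq (k n : ℕ) (hk1 : 1 ≤ k) (hkn' : k ≤ n) {p : ℝ}
    (hp : p ∈ Set.Ioo (0:ℝ) 1) :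
    (1 - p) * deriv (Hkn k n) p / Hkn k n p
      = (k:ℝ) * Np k n p / hkn k n p - ((n:ℝ) - k) := by
  obtain ⟨hp0, hp1⟩ := hp
  have hq0 : (0:ℝ) < 1 - p := by linarith
  have hpos : 0 < hkn k n p := hkn_pos k n hkn' ⟨hp0, hp1⟩
  set C : ℝ := (n.choose k : ℝ) with hC
  have hC0 : 0 < C := by
    rw [hC]; exact_mod_cast Nat.choose_pos hkn'
  -- derivative of numerator G x = k*C*x^k*(1-x)^(n-k)
  have hG : HasDerivAt (fun x : ℝ => (k : ℝ) * C * x ^ k * (1-x) ^ (n-k))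
      ((k:ℝ) * C * ((k:ℝ) * p ^ (k-1)) * (1-p) ^ (n-k)
        + (k:ℝ) * C * p ^ k * (-(((n-k:ℕ):ℝ) * (1-p) ^ (n-k-1)))) p := by
    have hq : HasDerivAt (fun x : ℝ => (1-x)^(n-k))
        (-(((n-k:ℕ):ℝ) * (1-p)^(n-k-1))) p := by
      have h1 : HasDerivAt (fun x : ℝ => 1 - x) (-1 : ℝ) p := by
        exact (hasDerivAt_id' (x := p)).const_sub (1:ℝ)
      have := (hasDerivAt_pow (n-k) (1-p)).comp p h1
      exact this.congr_deriv (by ring)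
    exact ((hasDerivAt_pow k p).const_mul ((k:ℝ) * C)).mul hq
  have hh := hasDerivAt_hkn k n hk1 hkn' p
  have hHd : HasDerivAt (Hkn k n)
      ((((k:ℝ) * C * ((k:ℝ) * p ^ (k-1)) * (1-p) ^ (n-k)
        + (k:ℝ) * C * p ^ k * (-(((n-k:ℕ):ℝ) * (1-p) ^ (n-k-1)))) * hkn k n p
        - (k : ℝ) * C * p ^ k * (1-p) ^ (n-k)
          * ((k : ℝ) * C * p ^ (k-1) * (1-p) ^ (n-k))) / (hkn k n p)^2) p := by
    rw [Hkn_eq_ratio k n hk1 hkn', ← hC]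
    exact hG.div hh hpos.ne'
  rw [hHd.deriv, Hkn_eq_ratio k n hk1 hkn', ← hC]
  beta_reduce
  -- abbreviations
  have hNp : Np k n p = (1 - p) * (hkn k n p - C * p ^ k * (1-p) ^ (n-k)) / p := by
    field_simp
    linarith [Np_identity k n hk1 hkn' p]
  set h := hkn k n p with hh'
  have hpk : p ^ k = p * p ^ (k-1) := by
    rw [← pow_succ']
    congr 1
    omega
  rcases Nat.lt_or_ge k n with hlt | hge
  · -- k < n
    have hqk : (1-p) ^ (n-k) = (1-p) * (1-p) ^ (n-k-1) := by
      rw [← pow_succ']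
      congr 1
      omega
    have hnk : ((n-k:ℕ):ℝ) = (n:ℝ) - k := by push_cast [hkn']; ring
    rw [hNp, hnk, hpk, hqk]
    set a := p ^ (k-1) with ha'
    set b := (1-p) ^ (n-k-1) with hb'
    have hk0 : (0:ℝ) < k := by exact_mod_cast hk1
    have ha : a ≠ 0 := pow_ne_zero _ hp0.ne'
    have hb : b ≠ 0 := pow_ne_zero _ hq0.ne'
    field_simp
    ring
  · -- k = n
    have hkeq : n = k := le_antisymm hge hkn'
    have hnkr : (n:ℝ) = (k:ℝ) := by exact_mod_cast hkeq
    have h0 : n - k = 0 := by omega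
    rw [hNp, h0, hnkr]
    simp only [pow_zero, Nat.cast_zero, mul_one, zero_mul, neg_zero, mul_zero,
      add_zero, sub_zero, Nat.zero_sub, Nat.cast_ofNat]
    rw [hpk]
    set a := p ^ (k-1) with ha'
    have hk0 : (0:ℝ) < k := by exact_mod_cast hk1
    have ha : a ≠ 0 := pow_ne_zero _ hp0.ne'
    field_simp
    ring

end Aux

/-- Lemma 2.2 (ii): `(1-p) H_{k|n}'(p) / H_{k|n}(p)` is negative and
decreasing on `(0,1)`. -/
theorem Hkn_log_deriv_neg_antitone
    (k n : ℕ) (hk1 : 1 ≤ k) (hkn' : k ≤ n) :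
    (∀ p ∈ Set.Ioo (0:ℝ) 1, (1 - p) * deriv (Hkn k n) p / Hkn k n p ≤ 0) ∧
      AntitoneOn (fun p => (1 - p) * deriv (Hkn k n) p / Hkn k n p)
        (Set.Ioo 0 1) := by
  constructor
  · intro p hp
    rw [key_eq k n hk1 hkn' hp]
    have hpos := hkn_pos k n hkn' hp
    have hneg := neg_ineq k n hk1 hkn' hp
    rw [sub_nonpos, div_le_iff₀ hpos]
    linarith
  · intro x hx y hy hxy
    simp only
    rw [key_eq k n hk1 hkn' hy, key_eq k n hk1 hkn' hx]
    have hpx := hkn_pos k n hkn' hx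
    have hpy := hkn_pos k n hkn' hy
    have hcross := cross_ineq k n hx hy hxy
    have hk0 : (0:ℝ) ≤ k := by positivity
    have : (k:ℝ) * Np k n y / hkn k n y ≤ (k:ℝ) * Np k n x / hkn k n x := by
      rw [div_le_div_iff₀ hpy hpx]
      nlinarith [hcross]
    linarith
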